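/- arXiv:math/0605251 — 4 statements merged into one kernel-verified Lean document; each statement's English description precedes it below -/
import Mathlib

section
/- Let μ be a probability measure on [0,∞) and define h(s) = ∫₀^∞ s/(s² + u²) dμ(u) for s > 0. Then for all s > 0, h(s) ≤ 1/s, and h is differentiable with h'(s) ≤ h(s)/s − 2·h(s)². -/
/-!
Differentiating under the integral sign gives
`h'(s) = ∫ (u² - s²) / (s² + u²)² dμ(u)`, and the integrand equals `g/s - 2 g²` for the kernel
`g(u) = s / (s² + u²)`. Hence `h'(s) = h(s)/s - 2 ∫ g² dμ`, and Jensen's inequality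
`(∫ g dμ)² ≤ ∫ g² dμ` for the probability measure `μ` gives the bound. The estimate `h(s) ≤ 1/s`
is the pointwise bound `g ≤ 1/s`, from `s² + u² ≥ s²`.
-/

open MeasureTheory Set

lemma sq_integral_le_integral_sq {Ω : Type*} [MeasurableSpace Ω] {μ : Measure Ω}
    [IsProbabilityMeasure μ] {X : Ω → ℝ} (hX : MemLp X 2 μ) :
    (∫ ω, X ω ∂μ) ^ 2 ≤ ∫ ω, X ω ^ 2 ∂μ := by
  have := ProbabilityTheory.variance_nonneg X μ
  rw [ProbabilityTheory.variance_eq_sub hX] at this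
  simpa only [Pi.pow_apply, sub_nonneg] using this

section Kernel

variable {s x : ℝ}

lemma div_sq_add_sq_le_one_div (hs : 0 < s) (u : ℝ) : s / (s ^ 2 + u ^ 2) ≤ 1 / s := by
  rw [div_le_div_iff₀ (by positivity) hs]
  nlinarith [sq_nonneg u]

lemma hasDerivAt_div_sq_add_sq (u : ℝ) (hx : x ≠ 0) :
    HasDerivAt (fun x ↦ x / (x ^ 2 + u ^ 2)) ((u ^ 2 - x ^ 2) / (x ^ 2 + u ^ 2) ^ 2) x := by
  have hden : HasDerivAt (fun x : ℝ ↦ x ^ 2 + u ^ 2) (2 * x) x := by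
    simpa using (hasDerivAt_pow 2 x).add_const (u ^ 2)
  refine ((hasDerivAt_id' x).div hden (by positivity)).congr_deriv ?_
  ring

lemma abs_sub_sq_div_sq_add_sq_sq_le (u : ℝ) (hx : x ≠ 0) :
    |(u ^ 2 - x ^ 2) / (x ^ 2 + u ^ 2) ^ 2| ≤ 1 / x ^ 2 := by
  have hpos : 0 < x ^ 2 + u ^ 2 := by positivity
  rw [abs_div, abs_of_pos (pow_pos hpos 2), div_le_div_iff₀ (pow_pos hpos 2) (by positivity),
    one_mul, sq (x ^ 2 + u ^ 2)]
  have habs : |u ^ 2 - x ^ 2| ≤ x ^ 2 + u ^ 2 := by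
    rw [abs_le]; constructor <;> nlinarith [sq_nonneg u, sq_nonneg x]
  calc |u ^ 2 - x ^ 2| * x ^ 2 ≤ (x ^ 2 + u ^ 2) * x ^ 2 := by gcongr
    _ ≤ (x ^ 2 + u ^ 2) * (x ^ 2 + u ^ 2) := by gcongr; nlinarith [sq_nonneg u]

lemma sub_sq_div_sq_add_sq_sq_eq (u : ℝ) (hs : s ≠ 0) :
    (u ^ 2 - s ^ 2) / (s ^ 2 + u ^ 2) ^ 2 =
      s / (s ^ 2 + u ^ 2) / s - 2 * (s / (s ^ 2 + u ^ 2)) ^ 2 := by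
  have : s ^ 2 + u ^ 2 ≠ 0 := by positivity
  field_simp
  ring

end Kernel

section Integral

variable {μ : Measure ℝ} {s : ℝ}

lemma memLp_div_sq_add_sq [IsFiniteMeasure μ] (hs : 0 < s) (p : ENNReal) :
    MemLp (fun u ↦ s / (s ^ 2 + u ^ 2)) p μ := by
  refine MemLp.of_bound (Measurable.aestronglyMeasurable (by fun_prop)) (1 / s)
    (.of_forall fun u ↦ ?_)
  rw [Real.norm_of_nonneg (by positivity)]
  exact div_sq_add_sq_le_one_div hs u

lemma integral_div_sq_add_sq_le [IsProbabilityMeasure μ] (hs : 0 < s) :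
    ∫ u, s / (s ^ 2 + u ^ 2) ∂μ ≤ 1 / s := by
  calc ∫ u, s / (s ^ 2 + u ^ 2) ∂μ ≤ ∫ _, 1 / s ∂μ :=
        integral_mono ((memLp_div_sq_add_sq hs 1).integrable le_rfl) (integrable_const _)
          (div_sq_add_sq_le_one_div hs)
    _ = 1 / s := by simp

lemma hasDerivAt_integral_div_sq_add_sq [IsFiniteMeasure μ] (hs : 0 < s) :
    HasDerivAt (fun x ↦ ∫ u, x / (x ^ 2 + u ^ 2) ∂μ)
      (∫ u, (u ^ 2 - s ^ 2) / (s ^ 2 + u ^ 2) ^ 2 ∂μ) s := by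
  have near_s : ∀ x ∈ Metric.ball s (s / 2), s / 2 < x := fun x hx ↦ by
    have := (abs_lt.mp (Real.dist_eq x s ▸ Metric.mem_ball.mp hx)).1
    linarith
  refine (hasDerivAt_integral_of_dominated_loc_of_deriv_le
    (F := fun x u ↦ x / (x ^ 2 + u ^ 2)) (F' := fun x u ↦ (u ^ 2 - x ^ 2) / (x ^ 2 + u ^ 2) ^ 2)
    (bound := fun _ ↦ 1 / (s / 2) ^ 2) (Metric.ball_mem_nhds s (half_pos hs))
    (.of_forall fun x ↦ Measurable.aestronglyMeasurable (by fun_prop))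
    ((memLp_div_sq_add_sq hs 1).integrable le_rfl)
    (Measurable.aestronglyMeasurable (by fun_prop)) ?_ (integrable_const _) ?_).2
  · refine .of_forall fun u x hx ↦ ?_
    have hsx := near_s x hx
    calc ‖(u ^ 2 - x ^ 2) / (x ^ 2 + u ^ 2) ^ 2‖ ≤ 1 / x ^ 2 :=
          abs_sub_sq_div_sq_add_sq_sq_le u (by linarith)
      _ ≤ 1 / (s / 2) ^ 2 := by gcongr
  · exact .of_forall fun u x hx ↦ hasDerivAt_div_sq_add_sq u (by linarith [near_s x hx])

end Integral

theorem stmt2_general (μ : Measure ℝ) [IsProbabilityMeasure μ]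
    (h : ℝ → ℝ) (hdef : ∀ s : ℝ, h s = ∫ u, s / (s ^ 2 + u ^ 2) ∂μ)
    (s : ℝ) (hs : 0 < s) :
    h s ≤ 1 / s ∧ ∃ d : ℝ, HasDerivAt h d s ∧ d ≤ h s / s - 2 * h s ^ 2 := by
  set g : ℝ → ℝ := fun u ↦ s / (s ^ 2 + u ^ 2)
  have hg := memLp_div_sq_add_sq (μ := μ) hs
  have hderiv : ∫ u, (u ^ 2 - s ^ 2) / (s ^ 2 + u ^ 2) ^ 2 ∂μ
      = h s / s - 2 * ∫ u, g u ^ 2 ∂μ := by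
    simp only [sub_sq_div_sq_add_sq_sq_eq _ hs.ne']
    rw [integral_sub (((hg 1).integrable le_rfl).div_const s) (((hg 2).integrable_sq).const_mul 2),
      integral_div, integral_const_mul, hdef]
  refine ⟨hdef s ▸ integral_div_sq_add_sq_le hs, _,
    funext hdef ▸ hasDerivAt_integral_div_sq_add_sq hs, ?_⟩
  rw [hderiv, hdef s]
  linarith [sq_integral_le_integral_sq (hg 2)]

theorem stmt2 (μ : Measure ℝ) [IsProbabilityMeasure μ] (hμ : μ (Iio 0) = 0)
    (h : ℝ → ℝ) (hdef : ∀ s : ℝ, h s = ∫ u, s / (s ^ 2 + u ^ 2) ∂μ)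
    (s : ℝ) (hs : 0 < s) :
    h s ≤ 1 / s ∧ ∃ d : ℝ, HasDerivAt h d s ∧ d ≤ h s / s - 2 * h s ^ 2 :=
  stmt2_general μ h hdef s hs
end

section
/- Let μ be a probability measure on [0,∞) which is not a Dirac measure, let h(s) = ∫₀^∞ s/(s²+u²) dμ(u), and k(s,t) = (s−t)·(1/h(s) − s + t). Then s ↦ k(s,0) is a strictly increasing bijection from (0,∞) onto (λ₁(μ)², λ₂(μ)²), where λ₁(μ) = (∫ u^{-2} dμ)^{-1/2} and λ₂(μ) = (∫ u² dμ)^{1/2}. -/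
/-!
Put `B(s) = ∫ (s² + u²)⁻¹ dμ`, so that `h(s) = s B(s)` and `k(s, 0) = B(s)⁻¹ - s²`.
For `0 < s₁ < s₂` and `c = s₂² - s₁²` one has `(s₂² + u²)⁻¹ = ψ((s₁² + u²)⁻¹)` with the strictly
concave `ψ(t) = t / (1 + c t)`, so strict Jensen gives `B(s₂) < ψ(B(s₁))`, i.e.
`B(s₂)⁻¹ - s₂² > B(s₁)⁻¹ - s₁²`; the equality case of Jensen would make `u²`, hence `u`, a.e.
constant, i.e. `μ` a Dirac mass. As `s ↓ 0`, monotone convergence gives `B(s) ↑ ∫ u⁻² dμ`; as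
`s → ∞`, `k(s, 0) = ∫ s²u²/(s² + u²) dμ / ∫ s²/(s² + u²) dμ` with numerator increasing to
`∫ u² dμ` and denominator to `1`. Continuity and the intermediate value theorem give the bijection.
-/

open MeasureTheory Set Filter Topology
open scoped ENNReal

theorem strictConcaveOn_div_one_add_mul {c : ℝ} (hc : 0 < c) :
    StrictConcaveOn ℝ (Ici 0) fun t => t / (1 + c * t) := by
  refine ⟨convex_Ici 0, fun x (hx : 0 ≤ x) y (hy : 0 ≤ y) hxy a b ha hb hab => ?_⟩
  simp only [smul_eq_mul]
  have hxy' : x - y ≠ 0 := sub_ne_zero.mpr hxy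
  have hgap : (a * x + b * y) / (1 + c * (a * x + b * y)) -
      (a * (x / (1 + c * x)) + b * (y / (1 + c * y))) =
      a * b * c * (x - y) ^ 2 / ((1 + c * x) * (1 + c * y) * (1 + c * (a * x + b * y))) := by
    obtain rfl : b = 1 - a := by linarith
    field_simp
    ring
  have hpos : 0 < a * b * c * (x - y) ^ 2 /
      ((1 + c * x) * (1 + c * y) * (1 + c * (a * x + b * y))) := by
    positivity
  linarith

theorem MeasureTheory.Measure.eq_dirac_of_ae_eq_const {α : Type*} [MeasurableSpace α]
    {μ : Measure α} [IsProbabilityMeasure μ] {c : α} (h : id =ᵐ[μ] fun _ => c) :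
    μ = Measure.dirac c := by
  rw [← Measure.map_id (μ := μ), Measure.map_congr h, Measure.map_const, measure_univ, one_smul]

theorem not_ae_eq_const_sq {μ : Measure ℝ} [IsProbabilityMeasure μ] (hnonneg : ∀ᵐ u ∂μ, 0 ≤ u)
    (hnd : ∀ c : ℝ, μ ≠ Measure.dirac c) (c : ℝ) :
    ¬ (fun u : ℝ => u ^ 2) =ᵐ[μ] fun _ => c := by
  intro hc
  refine hnd √c (Measure.eq_dirac_of_ae_eq_const ?_)
  filter_upwards [hc, hnonneg] with u hu hu0
  rw [id, ← hu, Real.sqrt_sq hu0]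

theorem StrictMonoOn.bijOn_Ioi_Ioo_of_tendsto {α β : Type*} [ConditionallyCompleteLinearOrder α]
    [DenselyOrdered α] [NoMaxOrder α] [TopologicalSpace α] [OrderTopology α] [LinearOrder β]
    [TopologicalSpace β] [OrderClosedTopology β] {f : α → β} {x₀ : α} {a b : β}
    (hmono : StrictMonoOn f (Ioi x₀)) (hcont : ContinuousOn f (Ioi x₀))
    (ha : Tendsto f (𝓝[>] x₀) (𝓝 a)) (hb : Tendsto f atTop (𝓝 b)) :
    BijOn f (Ioi x₀) (Ioo a b) := by
  refine ⟨fun s hs => ⟨?_, ?_⟩, hmono.injOn, fun y hy => ?_⟩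
  · obtain ⟨m, hm, hms⟩ := exists_between hs
    refine (le_of_tendsto ha ?_).trans_lt (hmono hm hs hms)
    filter_upwards [Ioo_mem_nhdsGT hm] with t ht
    exact hmono.monotoneOn ht.1 hm ht.2.le
  · obtain ⟨m, hsm⟩ := exists_gt s
    have hm : m ∈ Ioi x₀ := (mem_Ioi.mp hs).trans hsm
    refine (hmono hs hm hsm).trans_le (ge_of_tendsto hb ?_)
    filter_upwards [eventually_ge_atTop m] with t ht
    exact hmono.monotoneOn hm (hm.trans_le ht) ht
  · obtain ⟨s₁, hfs₁, hs₁⟩ := ((ha.eventually (eventually_lt_nhds hy.1)).and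
      self_mem_nhdsWithin).exists
    obtain ⟨s₂, hfs₂, hs₁₂⟩ := ((hb.eventually (eventually_gt_nhds hy.2)).and
      (eventually_ge_atTop s₁)).exists
    have hsub : Icc s₁ s₂ ⊆ Ioi x₀ := fun t ht => (mem_Ioi.mp hs₁).trans_le ht.1
    obtain ⟨s, hs, rfl⟩ := intermediate_value_Icc hs₁₂ (hcont.mono hsub) ⟨hfs₁.le, hfs₂.le⟩
    exact ⟨s, hsub hs, rfl⟩

theorem tendsto_lintegral_atTop_of_monotoneOn {α : Type*} [MeasurableSpace α] {μ : Measure α}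
    {f : ℝ → α → ℝ≥0∞} {g : α → ℝ≥0∞} (a : ℝ) (hf : ∀ s, AEMeasurable (f s) μ)
    (hmono : ∀ x, MonotoneOn (fun s => f s x) (Ici a))
    (hlim : ∀ x, Tendsto (fun s => f s x) atTop (𝓝 (g x))) :
    Tendsto (fun s => ∫⁻ x, f s x ∂μ) atTop (𝓝 (∫⁻ x, g x ∂μ)) := by
  have hmax : Tendsto (fun s : ℝ => max a s) atTop atTop :=
    tendsto_atTop_mono (le_max_right a) tendsto_id
  have hmono' : Monotone fun s => ∫⁻ x, f (max a s) x ∂μ := fun s t hst =>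
    lintegral_mono fun x => hmono x (le_max_left a s) (le_max_left a t) (max_le_max_left a hst)
  have hseq : Tendsto (fun n : ℕ => ∫⁻ x, f (max a n) x ∂μ) atTop (𝓝 (∫⁻ x, g x ∂μ)) :=
    lintegral_tendsto_of_tendsto_of_monotone (fun n => hf _)
      (ae_of_all _ fun x n m hnm => hmono x (le_max_left a n) (le_max_left a m)
        (max_le_max_left a (Nat.cast_le.mpr hnm)))
      (ae_of_all _ fun x => ((hlim x).comp hmax).comp tendsto_natCast_atTop_atTop)
  have hsup := tendsto_atTop_iSup hmono'
  rw [tendsto_nhds_unique (hsup.comp tendsto_natCast_atTop_atTop) hseq] at hsup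
  exact hsup.congr' ((eventually_ge_atTop a).mono fun s hs => by rw [max_eq_right hs])

theorem sq_div_sq_add_sq_eq {s : ℝ} (hs : s ≠ 0) (u : ℝ) :
    u ^ 2 / (s ^ 2 + u ^ 2) = 1 - s ^ 2 * (s ^ 2 + u ^ 2)⁻¹ := by
  field_simp
  ring

theorem monotoneOn_sq_div_sq_add_sq (u : ℝ) :
    MonotoneOn (fun s : ℝ => s ^ 2 / (s ^ 2 + u ^ 2)) (Ioi 0) := by
  intro s (hs : 0 < s) t (ht : 0 < t) hst
  dsimp only
  rw [div_le_div_iff₀ (by positivity) (by positivity)]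
  nlinarith [mul_le_mul_of_nonneg_right (pow_le_pow_left₀ hs.le hst 2) (sq_nonneg u)]

theorem tendsto_sq_div_sq_add_sq_atTop (u : ℝ) :
    Tendsto (fun s : ℝ => s ^ 2 / (s ^ 2 + u ^ 2)) atTop (𝓝 1) := by
  have hlim : Tendsto (fun s : ℝ => (1 + u ^ 2 * s⁻¹ ^ 2)⁻¹) atTop (𝓝 1) := by
    simpa using (((tendsto_inv_atTop_zero.pow 2).const_mul (u ^ 2)).const_add 1).inv₀ (by simp)
  refine hlim.congr' ((eventually_ne_atTop 0).mono fun s hs => ?_)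
  field_simp

section InvSqAddSq

variable {μ : Measure ℝ} {s : ℝ}

-- The inverse is taken in `ℝ≥0∞`, so the integrand at `u = 0` is `∞`, as is `0 ^ (-2)`.
theorem tendsto_lintegral_inv_ofReal_sq_add_sq_nhdsGT_zero :
    Tendsto (fun s => ∫⁻ u, (ENNReal.ofReal (s ^ 2 + u ^ 2))⁻¹ ∂μ) (𝓝[>] 0)
      (𝓝 (∫⁻ u, (ENNReal.ofReal (u ^ 2))⁻¹ ∂μ)) := by
  refine tendsto_nhdsGT_zero_of_comp_inv_tendsto_atTop
    (tendsto_lintegral_atTop_of_monotoneOn 1 (fun t => by fun_prop) (fun u t ht t' ht' htt' => ?_)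
      fun u => ?_)
  · have ht0 : 0 < t := zero_lt_one.trans_le ht
    have hinv : t'⁻¹ ≤ t⁻¹ := inv_anti₀ ht0 htt'
    have hinv_nonneg : 0 ≤ t'⁻¹ := inv_nonneg.mpr (ht0.le.trans htt')
    dsimp only
    gcongr
  · refine tendsto_inv_iff.mpr ((ENNReal.continuous_ofReal.tendsto _).comp ?_)
    simpa using (tendsto_inv_atTop_zero.pow 2).add_const (u ^ 2)

theorem tendsto_lintegral_ofReal_sq_mul_sq_div_sq_add_sq_atTop :
    Tendsto (fun s => ∫⁻ u, ENNReal.ofReal (u ^ 2 * (s ^ 2 / (s ^ 2 + u ^ 2))) ∂μ) atTop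
      (𝓝 (∫⁻ u, ENNReal.ofReal (u ^ 2) ∂μ)) := by
  refine tendsto_lintegral_atTop_of_monotoneOn 1 (fun s => by fun_prop) (fun u s hs t ht hst => ?_)
    fun u => ?_
  · exact ENNReal.ofReal_le_ofReal (mul_le_mul_of_nonneg_left
      (monotoneOn_sq_div_sq_add_sq u (mem_Ioi.mpr (zero_lt_one.trans_le hs))
        (mem_Ioi.mpr (zero_lt_one.trans_le ht)) hst)
      (sq_nonneg u))
  · simpa using ENNReal.tendsto_ofReal ((tendsto_sq_div_sq_add_sq_atTop u).const_mul (u ^ 2))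

theorem lintegral_ofReal_rpow_neg_two (hnonneg : ∀ᵐ u ∂μ, 0 ≤ u) :
    ∫⁻ u, ENNReal.ofReal u ^ (-2 : ℝ) ∂μ = ∫⁻ u, (ENNReal.ofReal (u ^ 2))⁻¹ ∂μ := by
  refine lintegral_congr_ae (hnonneg.mono fun u (hu : 0 ≤ u) => ?_)
  dsimp only
  rw [ENNReal.ofReal_pow hu, ENNReal.rpow_neg, ← ENNReal.rpow_natCast]
  norm_num

theorem lintegral_ofReal_rpow_two (hnonneg : ∀ᵐ u ∂μ, 0 ≤ u) :
    ∫⁻ u, ENNReal.ofReal u ^ (2 : ℝ) ∂μ = ∫⁻ u, ENNReal.ofReal (u ^ 2) ∂μ := by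
  refine lintegral_congr_ae (hnonneg.mono fun u (hu : 0 ≤ u) => ?_)
  dsimp only
  rw [ENNReal.ofReal_pow hu, ← ENNReal.rpow_natCast]
  norm_num

section FiniteMeasure

variable [IsFiniteMeasure μ]

theorem integrable_inv_sq_add_sq (hs : s ≠ 0) :
    Integrable (fun u : ℝ => (s ^ 2 + u ^ 2)⁻¹) μ := by
  refine .of_bound (by fun_prop (disch := intro u; positivity)) (s ^ 2)⁻¹ (ae_of_all _ fun u => ?_)
  rw [Real.norm_of_nonneg (by positivity)]
  gcongr
  exact le_add_of_nonneg_right (sq_nonneg u)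

theorem integrable_sq_div_sq_add_sq (hs : s ≠ 0) :
    Integrable (fun u : ℝ => u ^ 2 / (s ^ 2 + u ^ 2)) μ := by
  simp_rw [sq_div_sq_add_sq_eq hs]
  exact (integrable_const 1).sub ((integrable_inv_sq_add_sq hs).const_mul _)

theorem continuousAt_integral_inv_sq_add_sq {s₀ : ℝ} (hs₀ : s₀ ≠ 0) :
    ContinuousAt (fun s => ∫ u, (s ^ 2 + u ^ 2)⁻¹ ∂μ) s₀ := by
  have hs₀' : 0 < s₀ ^ 2 / 2 := by positivity
  have hnhds : {s : ℝ | s₀ ^ 2 / 2 < s ^ 2} ∈ 𝓝 s₀ :=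
    (continuous_pow 2).isOpen_preimage _ isOpen_Ioi |>.mem_nhds
      (show s₀ ^ 2 / 2 < s₀ ^ 2 by linarith)
  refine continuousAt_of_dominated (bound := fun _ => (s₀ ^ 2 / 2)⁻¹) ?_ ?_
    (integrable_const _) (ae_of_all _ fun u => ?_)
  · filter_upwards [hnhds] with s (hs : s₀ ^ 2 / 2 < s ^ 2)
    exact Continuous.aestronglyMeasurable
      (by fun_prop (disch := intro u; nlinarith [sq_nonneg u]))
  · filter_upwards [hnhds] with s (hs : s₀ ^ 2 / 2 < s ^ 2)
    refine ae_of_all _ fun u => ?_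
    rw [Real.norm_of_nonneg (by positivity)]
    gcongr
    nlinarith [sq_nonneg u]
  · exact ContinuousAt.inv₀ (by fun_prop) (by positivity)

theorem integral_inv_sq_add_sq_pos [NeZero μ] (hs : s ≠ 0) :
    0 < ∫ u, (s ^ 2 + u ^ 2)⁻¹ ∂μ := by
  rw [integral_pos_iff_support_of_nonneg (fun u => by positivity) (integrable_inv_sq_add_sq hs)]
  rw [Function.support_eq_univ fun u => (inv_pos.mpr (by positivity)).ne']
  exact Measure.measure_univ_pos.mpr (NeZero.ne μ)

theorem ofReal_inv_integral_inv_sq_add_sq_sub_sq [NeZero μ] (hs : s ≠ 0) :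
    ENNReal.ofReal ((∫ u, (s ^ 2 + u ^ 2)⁻¹ ∂μ)⁻¹ - s ^ 2) =
      (∫⁻ u, (ENNReal.ofReal (s ^ 2 + u ^ 2))⁻¹ ∂μ)⁻¹ - ENNReal.ofReal (s ^ 2) := by
  rw [ENNReal.ofReal_sub _ (sq_nonneg s), ENNReal.ofReal_inv_of_pos (integral_inv_sq_add_sq_pos hs),
    ofReal_integral_eq_lintegral_ofReal (integrable_inv_sq_add_sq hs)
      (ae_of_all _ fun u => by positivity)]
  congr 2
  exact lintegral_congr fun u => ENNReal.ofReal_inv_of_pos (by positivity)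

end FiniteMeasure

variable [IsProbabilityMeasure μ]

theorem integral_sq_div_sq_add_sq (hs : s ≠ 0) :
    ∫ u, u ^ 2 / (s ^ 2 + u ^ 2) ∂μ = 1 - s ^ 2 * ∫ u, (s ^ 2 + u ^ 2)⁻¹ ∂μ := by
  simp_rw [sq_div_sq_add_sq_eq hs]
  rw [integral_sub (integrable_const 1) ((integrable_inv_sq_add_sq hs).const_mul _),
    integral_const_mul]
  simp

theorem sq_lt_inv_integral_inv_sq_add_sq (hX : ¬ (fun u : ℝ => u ^ 2) =ᵐ[μ] 0) (hs : s ≠ 0) :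
    s ^ 2 < (∫ u, (s ^ 2 + u ^ 2)⁻¹ ∂μ)⁻¹ := by
  have hB := integral_inv_sq_add_sq_pos (μ := μ) hs
  have hA : 0 < ∫ u, u ^ 2 / (s ^ 2 + u ^ 2) ∂μ := by
    refine (integral_nonneg fun u => by positivity).lt_of_ne fun h0 => hX ?_
    filter_upwards [(integral_eq_zero_iff_of_nonneg (fun u => by positivity)
      (integrable_sq_div_sq_add_sq hs)).mp h0.symm] with u hu
    simpa [div_eq_zero_iff, (by positivity : s ^ 2 + u ^ 2 ≠ 0)] using hu
  rw [integral_sq_div_sq_add_sq hs] at hA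
  rw [← one_div, lt_div_iff₀ hB]
  linarith

theorem strictMonoOn_inv_integral_inv_sq_add_sq_sub_sq
    (hX : ∀ c : ℝ, ¬ (fun u : ℝ => u ^ 2) =ᵐ[μ] fun _ => c) :
    StrictMonoOn (fun s => (∫ u, (s ^ 2 + u ^ 2)⁻¹ ∂μ)⁻¹ - s ^ 2) (Ioi 0) := by
  intro s₁ hs₁ s₂ hs₂ h12
  have hs₁' : s₁ ≠ 0 := (mem_Ioi.mp hs₁).ne'
  have hs₂' : s₂ ≠ 0 := (mem_Ioi.mp hs₂).ne'
  have hc : 0 < s₂ ^ 2 - s₁ ^ 2 := by nlinarith [mem_Ioi.mp hs₁]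
  set c := s₂ ^ 2 - s₁ ^ 2
  set B₁ := ∫ u, (s₁ ^ 2 + u ^ 2)⁻¹ ∂μ
  set B₂ := ∫ u, (s₂ ^ 2 + u ^ 2)⁻¹ ∂μ
  have hB₁ : 0 < B₁ := integral_inv_sq_add_sq_pos hs₁'
  have hB₂ : 0 < B₂ := integral_inv_sq_add_sq_pos hs₂'
  have hcomp : ∀ u : ℝ, (s₁ ^ 2 + u ^ 2)⁻¹ / (1 + c * (s₁ ^ 2 + u ^ 2)⁻¹) = (s₂ ^ 2 + u ^ 2)⁻¹ :=
    fun u => by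
      field_simp
      ring
  have hjensen := (strictConcaveOn_div_one_add_mul hc).ae_eq_const_or_lt_map_average (μ := μ)
    (f := fun u : ℝ => (s₁ ^ 2 + u ^ 2)⁻¹)
    (ContinuousOn.div continuousOn_id (by fun_prop) fun t (ht : 0 ≤ t) => by positivity)
    isClosed_Ici (ae_of_all _ fun u => mem_Ici.mpr (by positivity))
    (integrable_inv_sq_add_sq hs₁')
    (by simpa only [Function.comp_def, hcomp] using integrable_inv_sq_add_sq hs₂')
  simp only [average_eq_integral, hcomp] at hjensen
  rcases hjensen with hconst | hlt
  · refine absurd ?_ (hX (B₁⁻¹ - s₁ ^ 2))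
    filter_upwards [hconst] with u hu
    rw [Function.const_apply, inv_eq_iff_eq_inv] at hu
    show u ^ 2 = B₁⁻¹ - s₁ ^ 2
    linarith
  · have hψB₁ : (B₁ / (1 + c * B₁))⁻¹ = B₁⁻¹ + c := by field_simp
    have hgap : B₁⁻¹ + c < B₂⁻¹ := hψB₁ ▸ inv_strictAnti₀ hB₂ hlt
    show B₁⁻¹ - s₁ ^ 2 < B₂⁻¹ - s₂ ^ 2
    linarith

theorem tendsto_lintegral_ofReal_sq_div_sq_add_sq_atTop :
    Tendsto (fun s => ∫⁻ u, ENNReal.ofReal (s ^ 2 / (s ^ 2 + u ^ 2)) ∂μ) atTop (𝓝 1) := by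
  simpa using tendsto_lintegral_atTop_of_monotoneOn (μ := μ) (g := fun _ => 1) 1
    (fun s => by fun_prop)
    (fun u s hs t ht hst => ENNReal.ofReal_le_ofReal (monotoneOn_sq_div_sq_add_sq u
      (mem_Ioi.mpr (zero_lt_one.trans_le hs)) (mem_Ioi.mpr (zero_lt_one.trans_le ht)) hst))
    fun u => by simpa using ENNReal.tendsto_ofReal (tendsto_sq_div_sq_add_sq_atTop u)

theorem ofReal_inv_integral_inv_sq_add_sq_sub_sq_eq_div (hs : s ≠ 0) :
    ENNReal.ofReal ((∫ u, (s ^ 2 + u ^ 2)⁻¹ ∂μ)⁻¹ - s ^ 2) =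
      (∫⁻ u, ENNReal.ofReal (u ^ 2 * (s ^ 2 / (s ^ 2 + u ^ 2))) ∂μ) /
        ∫⁻ u, ENNReal.ofReal (s ^ 2 / (s ^ 2 + u ^ 2)) ∂μ := by
  have hB := integral_inv_sq_add_sq_pos (μ := μ) hs
  have hnum_eq : ∀ u : ℝ, u ^ 2 * (s ^ 2 / (s ^ 2 + u ^ 2)) = s ^ 2 * (u ^ 2 / (s ^ 2 + u ^ 2)) :=
    fun u => by ring
  have hden_eq : ∀ u : ℝ, s ^ 2 / (s ^ 2 + u ^ 2) = s ^ 2 * (s ^ 2 + u ^ 2)⁻¹ := fun u => by ring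
  have hnum_int : Integrable (fun u : ℝ => u ^ 2 * (s ^ 2 / (s ^ 2 + u ^ 2))) μ := by
    simpa only [hnum_eq] using (integrable_sq_div_sq_add_sq hs).const_mul (s ^ 2)
  have hden_int : Integrable (fun u : ℝ => s ^ 2 / (s ^ 2 + u ^ 2)) μ := by
    simpa only [hden_eq] using (integrable_inv_sq_add_sq hs).const_mul (s ^ 2)
  have hnum : ∫ u, u ^ 2 * (s ^ 2 / (s ^ 2 + u ^ 2)) ∂μ =
      s ^ 2 * (1 - s ^ 2 * ∫ u, (s ^ 2 + u ^ 2)⁻¹ ∂μ) := by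
    simp_rw [hnum_eq, integral_const_mul, integral_sq_div_sq_add_sq hs]
  have hden : ∫ u, s ^ 2 / (s ^ 2 + u ^ 2) ∂μ = s ^ 2 * ∫ u, (s ^ 2 + u ^ 2)⁻¹ ∂μ := by
    simp_rw [hden_eq, integral_const_mul]
  have hratio : (∫ u, (s ^ 2 + u ^ 2)⁻¹ ∂μ)⁻¹ - s ^ 2 =
      (∫ u, u ^ 2 * (s ^ 2 / (s ^ 2 + u ^ 2)) ∂μ) / ∫ u, s ^ 2 / (s ^ 2 + u ^ 2) ∂μ := by
    rw [hnum, hden, mul_div_mul_left _ _ (pow_ne_zero 2 hs), sub_div, mul_div_assoc,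
      div_self hB.ne', mul_one, one_div]
  rw [hratio, ENNReal.ofReal_div_of_pos (by rw [hden]; positivity),
    ofReal_integral_eq_lintegral_ofReal hnum_int (ae_of_all _ fun u => by positivity),
    ofReal_integral_eq_lintegral_ofReal hden_int (ae_of_all _ fun u => by positivity)]

theorem continuousOn_inv_integral_inv_sq_add_sq_sub_sq :
    ContinuousOn (fun s => (∫ u, (s ^ 2 + u ^ 2)⁻¹ ∂μ)⁻¹ - s ^ 2) (Ioi 0) := by
  refine ContinuousOn.sub (fun s (hs : 0 < s) => ?_) (by fun_prop)
  exact ((continuousAt_integral_inv_sq_add_sq hs.ne').inv₀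
    (integral_inv_sq_add_sq_pos hs.ne').ne').continuousWithinAt

theorem tendsto_ofReal_inv_integral_inv_sq_add_sq_sub_sq_nhdsGT_zero :
    Tendsto (fun s => ENNReal.ofReal ((∫ u, (s ^ 2 + u ^ 2)⁻¹ ∂μ)⁻¹ - s ^ 2)) (𝓝[>] 0)
      (𝓝 (∫⁻ u, (ENNReal.ofReal (u ^ 2))⁻¹ ∂μ)⁻¹) := by
  have hsq : Tendsto (fun s : ℝ => ENNReal.ofReal (s ^ 2)) (𝓝[>] 0) (𝓝 0) := by
    simpa using ENNReal.tendsto_ofReal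
      (((continuous_pow 2).tendsto' (0 : ℝ) 0 (by simp)).mono_left nhdsWithin_le_nhds)
  have hlim := ENNReal.Tendsto.sub (tendsto_lintegral_inv_ofReal_sq_add_sq_nhdsGT_zero (μ := μ)).inv
    hsq (Or.inr ENNReal.zero_ne_top)
  rw [tsub_zero] at hlim
  exact hlim.congr' (eventually_nhdsWithin_of_forall fun s hs =>
    (ofReal_inv_integral_inv_sq_add_sq_sub_sq (ne_of_gt hs)).symm)

theorem tendsto_ofReal_inv_integral_inv_sq_add_sq_sub_sq_atTop :
    Tendsto (fun s => ENNReal.ofReal ((∫ u, (s ^ 2 + u ^ 2)⁻¹ ∂μ)⁻¹ - s ^ 2)) atTop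
      (𝓝 (∫⁻ u, ENNReal.ofReal (u ^ 2) ∂μ)) := by
  have hlim := ENNReal.Tendsto.div (tendsto_lintegral_ofReal_sq_mul_sq_div_sq_add_sq_atTop (μ := μ))
    (Or.inr one_ne_zero) (tendsto_lintegral_ofReal_sq_div_sq_add_sq_atTop (μ := μ))
    (Or.inl ENNReal.one_ne_top)
  rw [div_one] at hlim
  exact hlim.congr' ((eventually_ne_atTop 0).mono fun s hs =>
    (ofReal_inv_integral_inv_sq_add_sq_sub_sq_eq_div hs).symm)

theorem bijOn_ofReal_inv_integral_inv_sq_add_sq_sub_sq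
    (hX : ∀ c : ℝ, ¬ (fun u : ℝ => u ^ 2) =ᵐ[μ] fun _ => c) :
    BijOn (fun s => ENNReal.ofReal ((∫ u, (s ^ 2 + u ^ 2)⁻¹ ∂μ)⁻¹ - s ^ 2)) (Ioi 0)
      (Ioo (∫⁻ u, (ENNReal.ofReal (u ^ 2))⁻¹ ∂μ)⁻¹ (∫⁻ u, ENNReal.ofReal (u ^ 2) ∂μ)) := by
  have hmono := strictMonoOn_inv_integral_inv_sq_add_sq_sub_sq hX
  refine StrictMonoOn.bijOn_Ioi_Ioo_of_tendsto (fun s hs t (ht : 0 < t) hst => ?_)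
    (ENNReal.continuous_ofReal.comp_continuousOn continuousOn_inv_integral_inv_sq_add_sq_sub_sq)
    tendsto_ofReal_inv_integral_inv_sq_add_sq_sub_sq_nhdsGT_zero
    tendsto_ofReal_inv_integral_inv_sq_add_sq_sub_sq_atTop
  have hpos := sub_pos.mpr (sq_lt_inv_integral_inv_sq_add_sq (hX 0) ht.ne')
  exact (ENNReal.ofReal_lt_ofReal_iff hpos).mpr (hmono hs ht hst)

end InvSqAddSq

theorem stmt6 (μ : Measure ℝ) [IsProbabilityMeasure μ] (hμ : μ (Iio 0) = 0)
    (hnd : ∀ c : ℝ, μ ≠ Measure.dirac c)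
    (h : ℝ → ℝ) (hdef : ∀ s : ℝ, h s = ∫ u, s / (s ^ 2 + u ^ 2) ∂μ)
    (k : ℝ → ℝ → ℝ) (kdef : ∀ s t : ℝ, k s t = (s - t) * (1 / h s - s + t)) :
    StrictMonoOn (fun s => k s 0) (Ioi 0) ∧
      Set.BijOn (fun s => ENNReal.ofReal (k s 0)) (Ioi (0 : ℝ))
        (Ioo (((∫⁻ u, ENNReal.ofReal u ^ (-2 : ℝ) ∂μ) ^ (-(1 / 2) : ℝ)) ^ 2)
             (((∫⁻ u, ENNReal.ofReal u ^ (2 : ℝ) ∂μ) ^ ((1 / 2) : ℝ)) ^ 2)) := by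
  have hnonneg : ∀ᵐ u ∂μ, 0 ≤ u := measure_mono_null (fun u (hu : ¬ 0 ≤ u) => not_le.mp hu) hμ
  have hX := not_ae_eq_const_sq hnonneg hnd
  have hk : EqOn (fun s => (∫ u, (s ^ 2 + u ^ 2)⁻¹ ∂μ)⁻¹ - s ^ 2) (fun s => k s 0) (Ioi 0) :=
    fun s (hs : 0 < s) => by
      have hh : h s = s * ∫ u, (s ^ 2 + u ^ 2)⁻¹ ∂μ := by
        simp_rw [hdef, div_eq_mul_inv, integral_const_mul]
      have hB := integral_inv_sq_add_sq_pos (μ := μ) hs.ne'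
      simp only [kdef, hh]
      field_simp
      ring
  refine ⟨(strictMonoOn_inv_integral_inv_sq_add_sq_sub_sq hX).congr hk, ?_⟩
  rw [lintegral_ofReal_rpow_neg_two hnonneg, lintegral_ofReal_rpow_two hnonneg,
    ← ENNReal.rpow_natCast, ← ENNReal.rpow_mul, ← ENNReal.rpow_natCast, ← ENNReal.rpow_mul]
  norm_num [ENNReal.rpow_neg_one]
  exact (bijOn_ofReal_inv_integral_inv_sq_add_sq_sub_sq hX).congr fun s hs =>
    congrArg ENNReal.ofReal (hk hs)
end

section
/- Let μ be a probability measure on [0,∞) not a Dirac measure, and for t > 0 let s(λ,t) denote the unique s ∈ (t,∞) with k(s,t) = λ², where k(s,t) = (s−t)(1/h(s) − s + t) and h(s) = ∫₀^∞ s/(s²+u²) dμ(u). Then for every fixed λ > 0, one has 0 < s(λ,t) − t < λ²/t for all t > 0; in particular s(λ,t) − t → 0 as t → ∞. -/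
/-! For `s > 0`, `s * h s = ∫ s² / (s² + u²) dμ(u) < 1`, strictly because `μ` is not `δ₀`, so
`1 / h s > s` and hence `k s t > t * (s - t)` for `s > t > 0`. Evaluating at `s = s(λ, t)`, where
`k = λ²`, gives `s(λ, t) - t < λ² / t`. -/

open MeasureTheory Set Filter

theorem MeasureTheory.measure_compl_singleton_pos_of_ne_dirac {α : Type*} [MeasurableSpace α]
    [MeasurableSingletonClass α] (μ : Measure α) [IsProbabilityMeasure μ] {a : α}
    (hμ : μ ≠ Measure.dirac a) : 0 < μ {a}ᶜ := by
  refine pos_iff_ne_zero.2 fun hnull => hμ ?_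
  have hae : ∀ᵐ x ∂μ, x ∈ ({a} : Set α) := by rwa [ae_iff]
  rw [← Measure.restrict_eq_self_of_ae_mem hae, Measure.restrict_singleton,
    (prob_compl_eq_zero_iff (measurableSet_singleton a)).1 hnull, one_smul]

section PoissonKernel

variable {S : ℝ}

theorem inv_sub_div_sq_add_sq (hS : 0 < S) (u : ℝ) :
    1 / S - S / (S ^ 2 + u ^ 2) = u ^ 2 / (S * (S ^ 2 + u ^ 2)) := by
  field_simp
  ring

theorem div_sq_add_sq_le_inv (hS : 0 < S) (u : ℝ) : S / (S ^ 2 + u ^ 2) ≤ 1 / S := by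
  rw [← sub_nonneg, inv_sub_div_sq_add_sq hS]
  positivity

theorem integrable_div_sq_add_sq (μ : Measure ℝ) [IsFiniteMeasure μ] (hS : 0 < S) :
    Integrable (fun u => S / (S ^ 2 + u ^ 2)) μ := by
  refine Integrable.of_bound (by fun_prop : Measurable _).aestronglyMeasurable (1 / S)
    (Eventually.of_forall fun u => ?_)
  rw [Real.norm_of_nonneg (by positivity)]
  exact div_sq_add_sq_le_inv hS u

theorem integral_div_sq_add_sq_pos (μ : Measure ℝ) [IsFiniteMeasure μ] [NeZero μ] (hS : 0 < S) :
    0 < ∫ u, S / (S ^ 2 + u ^ 2) ∂μ := by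
  have hsupp : Function.support (fun u : ℝ => S / (S ^ 2 + u ^ 2)) = univ :=
    Function.support_eq_univ fun u => by positivity
  rw [integral_pos_iff_support_of_nonneg (fun u => by positivity) (integrable_div_sq_add_sq μ hS),
    hsupp, Measure.measure_univ_pos]
  exact NeZero.ne μ

theorem integral_div_sq_add_sq_lt_inv (μ : Measure ℝ) [IsProbabilityMeasure μ]
    (hμ : μ ≠ Measure.dirac 0) (hS : 0 < S) : ∫ u, S / (S ^ 2 + u ^ 2) ∂μ < 1 / S := by
  have hsupp : Function.support (fun u : ℝ => u ^ 2 / (S * (S ^ 2 + u ^ 2))) = {0}ᶜ := by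
    ext u
    simp [hS.ne', (show 0 < S ^ 2 + u ^ 2 by positivity).ne']
  have hpos : 0 < ∫ u, u ^ 2 / (S * (S ^ 2 + u ^ 2)) ∂μ := by
    rw [integral_pos_iff_support_of_nonneg (fun u => by positivity), hsupp]
    · exact measure_compl_singleton_pos_of_ne_dirac μ hμ
    · simp_rw [← inv_sub_div_sq_add_sq hS]
      exact (integrable_const _).sub (integrable_div_sq_add_sq μ hS)
  simp_rw [← inv_sub_div_sq_add_sq hS] at hpos
  rw [integral_sub (integrable_const _) (integrable_div_sq_add_sq μ hS), integral_const,
    probReal_univ, one_smul] at hpos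
  linarith

end PoissonKernel

theorem mul_sub_lt_sub_mul_inv_integral_sub_add (μ : Measure ℝ) [IsProbabilityMeasure μ]
    (hμ : μ ≠ Measure.dirac 0) {s t : ℝ} (ht : 0 < t) (hts : t < s) :
    t * (s - t) < (s - t) * (1 / ∫ u, s / (s ^ 2 + u ^ 2) ∂μ - s + t) := by
  have hs : 0 < s := ht.trans hts
  have hinv : s < 1 / ∫ u, s / (s ^ 2 + u ^ 2) ∂μ := by
    rw [lt_one_div hs (integral_div_sq_add_sq_pos μ hs)]
    exact integral_div_sq_add_sq_lt_inv μ hμ hs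
  rw [mul_comm]
  exact mul_lt_mul_of_pos_left (by linarith) (sub_pos.2 hts)

theorem stmt7_general (μ : Measure ℝ) [IsProbabilityMeasure μ]
    (hnd : ∀ c : ℝ, μ ≠ Measure.dirac c)
    (h : ℝ → ℝ) (hdef : ∀ s : ℝ, h s = ∫ u, s / (s ^ 2 + u ^ 2) ∂μ)
    (k : ℝ → ℝ → ℝ) (kdef : ∀ s t : ℝ, k s t = (s - t) * (1 / h s - s + t))
    (s : ℝ → ℝ → ℝ)
    (hsdef : ∀ lam t : ℝ, 0 < lam → 0 < t → s lam t ∈ Ioi t ∧ k (s lam t) t = lam ^ 2)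
    (lam : ℝ) (hlam : 0 < lam) :
    (∀ t : ℝ, 0 < t → 0 < s lam t - t ∧ s lam t - t < lam ^ 2 / t) ∧
      Tendsto (fun t => s lam t - t) atTop (nhds 0) := by
  have bounds : ∀ t : ℝ, 0 < t → 0 < s lam t - t ∧ s lam t - t < lam ^ 2 / t := by
    intro t ht
    obtain ⟨hts, hk⟩ := hsdef lam t hlam ht
    have key := mul_sub_lt_sub_mul_inv_integral_sub_add μ (hnd 0) ht hts
    rw [← hdef, ← kdef, hk] at key
    exact ⟨sub_pos.2 hts, by rwa [lt_div_iff₀ ht, mul_comm]⟩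
  refine ⟨bounds, ?_⟩
  refine tendsto_of_tendsto_of_tendsto_of_le_of_le' tendsto_const_nhds
    ((tendsto_const_nhds (x := lam ^ 2)).div_atTop tendsto_id) ?_ ?_ <;>
    filter_upwards [eventually_gt_atTop 0] with t ht
  exacts [(bounds t ht).1.le, (bounds t ht).2.le]

theorem stmt7 (μ : Measure ℝ) [IsProbabilityMeasure μ] (hμ : μ (Iio 0) = 0)
    (hnd : ∀ c : ℝ, μ ≠ Measure.dirac c)
    (h : ℝ → ℝ) (hdef : ∀ s : ℝ, h s = ∫ u, s / (s ^ 2 + u ^ 2) ∂μ)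
    (k : ℝ → ℝ → ℝ) (kdef : ∀ s t : ℝ, k s t = (s - t) * (1 / h s - s + t))
    (s : ℝ → ℝ → ℝ)
    (hsdef : ∀ lam t : ℝ, 0 < lam → 0 < t → s lam t ∈ Ioi t ∧ k (s lam t) t = lam ^ 2)
    (lam : ℝ) (hlam : 0 < lam) :
    (∀ t : ℝ, 0 < t → 0 < s lam t - t ∧ s lam t - t < lam ^ 2 / t) ∧
      Tendsto (fun t => s lam t - t) atTop (nhds 0) :=
  stmt7_general μ hnd h hdef k kdef s hsdef lam hlam
end

section
/- Let μ be a probability measure on [0,∞) and define h(s) = ∫₀^∞ s/(s²+u²) dμ(u) for s > 0. Then for every p ∈ (0,2), ∫₀^∞ u^{-p} dμ(u) = (2/π)·sin(πp/2)·∫₀^∞ s^{-p} h(s) ds, as an identity in [0,∞]. -/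
open MeasureTheory Set Real

/-!
By Tonelli the right-hand side is `(2/π) sin(πp/2) ∫ K(u) dμ(u)` with
`K(u) = ∫₀^∞ s^{1-p} / (s² + u²) ds`.
For `u > 0`, writing `1 / (s² + u²) = ∫₀^∞ e^{-x(s² + u²)} dx` and swapping again turns `K(u)`
into a Gaussian moment followed by a Gamma integral, giving `u^{-p} Γ(p/2) Γ(1 - p/2) / 2`, and
Euler's reflection formula turns this into `u^{-p} π / (2 sin(πp/2))`. For `u = 0` both `K(0)`
and `u^{-p}` are `∞`.
-/

theorem sin_pi_mul_div_two_pos {p : ℝ} (hp0 : 0 < p) (hp2 : p < 2) : 0 < sin (π * p / 2) :=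
  sin_pos_of_pos_of_lt_pi (by positivity) (by nlinarith [pi_pos])

theorem lintegral_Ioi_rpow_mul_exp_neg_mul_rpow {p q b : ℝ} (hp : 0 < p) (hq : -1 < q)
    (hb : 0 < b) :
    ∫⁻ x in Ioi (0 : ℝ), ENNReal.ofReal (x ^ q * exp (-b * x ^ p)) =
      ENNReal.ofReal (b ^ (-(q + 1) / p) * (1 / p) * Gamma ((q + 1) / p)) := by
  rw [← ofReal_integral_eq_lintegral_ofReal (integrableOn_rpow_mul_exp_neg_mul_rpow hq hp hb),
    integral_rpow_mul_exp_neg_mul_rpow hp hq hb]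
  filter_upwards [ae_restrict_mem measurableSet_Ioi] with x (hx : 0 < x)
  positivity

theorem lintegral_Ioi_exp_neg_mul {c : ℝ} (hc : 0 < c) :
    ∫⁻ x in Ioi (0 : ℝ), ENNReal.ofReal (exp (-c * x)) = ENNReal.ofReal c⁻¹ := by
  simpa [rpow_neg_one] using lintegral_Ioi_rpow_mul_exp_neg_mul_rpow one_pos neg_one_lt_zero hc

theorem lintegral_Ioi_rpow_eq_top (s : ℝ) :
    ∫⁻ x in Ioi (0 : ℝ), ENNReal.ofReal (x ^ s) = ⊤ := by
  by_contra h
  refine not_integrableOn_Ioi_rpow s ⟨by fun_prop, ?_⟩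
  rwa [hasFiniteIntegral_iff_ofReal, lt_top_iff_ne_top]
  filter_upwards [ae_restrict_mem measurableSet_Ioi] with x (hx : 0 < x)
  positivity

theorem ofReal_rpow_mul_div_sq_add_sq_eq_lintegral {s : ℝ} (hs : 0 < s) (p u : ℝ) :
    ENNReal.ofReal (s ^ (-p) * (s / (s ^ 2 + u ^ 2))) =
      ∫⁻ x in Ioi (0 : ℝ),
        ENNReal.ofReal (exp (-u ^ 2 * x)) * ENNReal.ofReal (s ^ (1 - p) * exp (-x * s ^ 2)) := by
  have hs' : 0 ≤ s ^ (1 - p) := by positivity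
  have hexp (x : ℝ) : exp (-u ^ 2 * x) * (s ^ (1 - p) * exp (-x * s ^ 2)) =
      s ^ (1 - p) * exp (-(s ^ 2 + u ^ 2) * x) := by
    rw [mul_left_comm, ← exp_add]; ring_nf
  simp_rw [← ENNReal.ofReal_mul (exp_pos _).le, hexp, ENNReal.ofReal_mul hs']
  rw [lintegral_const_mul' _ _ ENNReal.ofReal_ne_top, lintegral_Ioi_exp_neg_mul (by positivity),
    ← ENNReal.ofReal_mul hs', sub_eq_add_neg, rpow_add hs, rpow_one]
  ring_nf

theorem half_mul_Gamma_mul_rpow_mul_Gamma {p u : ℝ} (hu : 0 < u) :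
    1 / 2 * Gamma ((2 - p) / 2) * ((u ^ 2) ^ (-(p / 2)) * Gamma (p / 2)) =
      u ^ (-p) * (π / (2 * sin (π * p / 2))) := by
  have hpow : (u ^ 2) ^ (-(p / 2)) = u ^ (-p) := by
    rw [← rpow_natCast, ← rpow_mul hu.le]; ring_nf
  have hrefl := Gamma_mul_Gamma_one_sub (p / 2)
  rw [show 1 - p / 2 = (2 - p) / 2 by ring, show π * (p / 2) = π * p / 2 by ring] at hrefl
  rw [hpow, div_mul_eq_div_div_swap, ← hrefl]; ring

theorem lintegral_Ioi_rpow_mul_div_sq_add_sq_of_pos {p u : ℝ} (hp0 : 0 < p) (hp2 : p < 2)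
    (hu : 0 < u) :
    ∫⁻ s in Ioi (0 : ℝ), ENNReal.ofReal (s ^ (-p) * (s / (s ^ 2 + u ^ 2))) =
      ENNReal.ofReal (u ^ (-p) * (π / (2 * sin (π * p / 2)))) := by
  have hΓ : 0 ≤ 1 / 2 * Gamma ((2 - p) / 2) := by
    have := Gamma_pos_of_pos (s := (2 - p) / 2) (by linarith); positivity
  calc
    _ = ∫⁻ s in Ioi (0 : ℝ), ∫⁻ x in Ioi (0 : ℝ),
          ENNReal.ofReal (exp (-u ^ 2 * x)) * ENNReal.ofReal (s ^ (1 - p) * exp (-x * s ^ 2)) :=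
        setLIntegral_congr_fun measurableSet_Ioi fun s hs =>
          ofReal_rpow_mul_div_sq_add_sq_eq_lintegral hs p u
    _ = ∫⁻ x in Ioi (0 : ℝ), ENNReal.ofReal (exp (-u ^ 2 * x)) *
          ∫⁻ s in Ioi (0 : ℝ), ENNReal.ofReal (s ^ (1 - p) * exp (-x * s ^ 2)) := by
        rw [lintegral_lintegral_swap (by fun_prop)]
        simp_rw [lintegral_const_mul' _ _ ENNReal.ofReal_ne_top]
    _ = ∫⁻ x in Ioi (0 : ℝ), ENNReal.ofReal (exp (-u ^ 2 * x)) *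
          ENNReal.ofReal (x ^ (-(2 - p) / 2) * (1 / 2) * Gamma ((2 - p) / 2)) := by
        refine setLIntegral_congr_fun measurableSet_Ioi fun x (hx : 0 < x) => ?_
        have := lintegral_Ioi_rpow_mul_exp_neg_mul_rpow two_pos (by linarith : -1 < 1 - p) hx
        simp_rw [rpow_two] at this
        rw [this]; ring_nf
    _ = ENNReal.ofReal (1 / 2 * Gamma ((2 - p) / 2)) *
          ∫⁻ x in Ioi (0 : ℝ), ENNReal.ofReal (x ^ ((p - 2) / 2) * exp (-u ^ 2 * x ^ (1 : ℝ))) := by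
        rw [← lintegral_const_mul' _ _ ENNReal.ofReal_ne_top]
        refine setLIntegral_congr_fun measurableSet_Ioi fun x _ => ?_
        rw [← ENNReal.ofReal_mul (exp_pos _).le, ← ENNReal.ofReal_mul hΓ, rpow_one]
        ring_nf
    _ = _ := by
        rw [lintegral_Ioi_rpow_mul_exp_neg_mul_rpow one_pos (by linarith) (by positivity),
          ← ENNReal.ofReal_mul hΓ, ← half_mul_Gamma_mul_rpow_mul_Gamma hu]
        ring_nf

theorem lintegral_Ioi_rpow_mul_div_sq_add_sq {p u : ℝ} (hp0 : 0 < p) (hp2 : p < 2) (hu : 0 ≤ u) :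
    ∫⁻ s in Ioi (0 : ℝ), ENNReal.ofReal (s ^ (-p) * (s / (s ^ 2 + u ^ 2))) =
      ENNReal.ofReal u ^ (-p) * ENNReal.ofReal (π / (2 * sin (π * p / 2))) := by
  have hsin := sin_pi_mul_div_two_pos hp0 hp2
  rcases hu.eq_or_lt with rfl | hu
  · have hkernel : ∀ s ∈ Ioi (0 : ℝ), ENNReal.ofReal (s ^ (-p) * (s / (s ^ 2 + 0 ^ 2))) =
        ENNReal.ofReal (s ^ (-p - 1)) := fun s (hs : 0 < s) => by
      rw [sub_eq_add_neg, rpow_add hs, rpow_neg_one, zero_pow two_ne_zero, add_zero]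
      congr 1; field_simp
    rw [setLIntegral_congr_fun measurableSet_Ioi hkernel, lintegral_Ioi_rpow_eq_top,
      ENNReal.ofReal_zero, ENNReal.zero_rpow_of_neg (neg_neg_of_pos hp0),
      ENNReal.top_mul (ENNReal.ofReal_pos.2 (by positivity)).ne']
  · rw [lintegral_Ioi_rpow_mul_div_sq_add_sq_of_pos hp0 hp2 hu,
      ENNReal.ofReal_mul (by positivity), ENNReal.ofReal_rpow_of_pos hu]

theorem ofReal_integral_div_sq_add_sq {μ : Measure ℝ} [IsFiniteMeasure μ] {s : ℝ} (hs : 0 < s) :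
    ENNReal.ofReal (∫ u, s / (s ^ 2 + u ^ 2) ∂μ) =
      ∫⁻ u, ENNReal.ofReal (s / (s ^ 2 + u ^ 2)) ∂μ := by
  have hmeas : Measurable fun u : ℝ => s / (s ^ 2 + u ^ 2) := by fun_prop
  refine ofReal_integral_eq_lintegral_ofReal (.of_bound hmeas.aestronglyMeasurable s⁻¹ ?_)
    (.of_forall ?_)
  · refine .of_forall fun u => ?_
    rw [norm_of_nonneg (by positivity)]
    calc s / (s ^ 2 + u ^ 2) ≤ s / s ^ 2 :=
          div_le_div_of_nonneg_left hs.le (by positivity) (le_add_of_nonneg_right (sq_nonneg u))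
      _ = s⁻¹ := by field_simp
  · exact fun u => div_nonneg hs.le (by positivity)

theorem stmt8 (μ : Measure ℝ) [IsProbabilityMeasure μ] (hμ : μ (Iio 0) = 0)
    (p : ℝ) (hp0 : 0 < p) (hp2 : p < 2) :
    ∫⁻ u, ENNReal.ofReal u ^ (-p) ∂μ
      = ENNReal.ofReal (2 / Real.pi * Real.sin (Real.pi * p / 2)) *
        ∫⁻ s in Ioi (0 : ℝ),
          ENNReal.ofReal (s ^ (-p) * ∫ u, s / (s ^ 2 + u ^ 2) ∂μ) := by
  have hsin := sin_pi_mul_div_two_pos hp0 hp2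
  have hnonneg : ∀ᵐ u ∂μ, 0 ≤ u := by
    rw [ae_iff]; simp only [not_le]; exact hμ
  have hinner : ∀ s ∈ Ioi (0 : ℝ), ENNReal.ofReal (s ^ (-p) * ∫ u, s / (s ^ 2 + u ^ 2) ∂μ) =
      ∫⁻ u, ENNReal.ofReal (s ^ (-p) * (s / (s ^ 2 + u ^ 2))) ∂μ := fun s (hs : 0 < s) => by
    rw [ENNReal.ofReal_mul (by positivity), ofReal_integral_div_sq_add_sq hs,
      ← lintegral_const_mul' _ _ ENNReal.ofReal_ne_top]
    simp_rw [← ENNReal.ofReal_mul (rpow_nonneg hs.le _)]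
  calc
    _ = ∫⁻ u, ENNReal.ofReal (2 / π * sin (π * p / 2)) *
          (ENNReal.ofReal u ^ (-p) * ENNReal.ofReal (π / (2 * sin (π * p / 2)))) ∂μ := by
      refine lintegral_congr fun u => ?_
      rw [mul_left_comm, ← ENNReal.ofReal_mul (by positivity),
        show 2 / π * sin (π * p / 2) * (π / (2 * sin (π * p / 2))) = 1 by field_simp,
        ENNReal.ofReal_one, mul_one]
    _ = ENNReal.ofReal (2 / π * sin (π * p / 2)) *
          ∫⁻ u, (∫⁻ s in Ioi (0 : ℝ), ENNReal.ofReal (s ^ (-p) * (s / (s ^ 2 + u ^ 2)))) ∂μ := by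
      rw [lintegral_const_mul' _ _ ENNReal.ofReal_ne_top]
      congr 1
      exact lintegral_congr_ae (hnonneg.mono fun u hu =>
        (lintegral_Ioi_rpow_mul_div_sq_add_sq hp0 hp2 hu).symm)
    _ = _ := by
      rw [lintegral_lintegral_swap (by fun_prop), setLIntegral_congr_fun measurableSet_Ioi hinner]
end
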